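/- Let X ∈ ℝ^{d_X×T} with XX^⊤ invertible, Y ∈ ℝ^{d_Y×T}, ε > 0, c ≥ 0, and let Ξ = [ε^{1/2}(XX^⊤)^{-1/2}X ; Y] ∈ ℝ^{(d_X+d_Y)×T}. Let λ_1 ≥ … ≥ λ_{d_X+d_Y} ≥ 0 be the eigenvalues of ΞΞ^⊤. Then the minimum value of tr[(c+ε)Z^⊤Z − Z^⊤Z(εX^⊤(XX^⊤)^{-1}X + Y^⊤Y)] over Z ∈ ℝ^{d×T} with ZZ^⊤ ≼ I_d equals −Σ_{α=1}^{min(d, d_X+d_Y)} max(λ_α − c − ε, 0). -/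

import Mathlib

open Matrix Finset

/-!
By the SVD of `Ξ`, `εXᵀ(XXᵀ)⁻¹X + YᵀY = ΞᵀΞ = ∑ λ_α v_α v_αᵀ` with orthonormal `v_α`, so the
objective is `(c+ε) tr(ZᵀZ) − ∑ λ_α t_α` with `t_α = ‖Z v_α‖²`. The constraint `ZZᵀ ≼ I` makes
`Z` a contraction, so `0 ≤ t_α ≤ 1`, and Bessel's inequality gives `∑ t_α ≤ tr(ZᵀZ) ≤ d`. Hence
the objective is at least `∑ min(c+ε−λ_α, 0) t_α`, and a total weight of at most
`min(d, dX+dY)`, at most `1` per index, is best spent on the first, most negative, coefficients.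
The bound is attained by the `Z` whose `α`-th row is `v_α` when `α < min(d, dX+dY)` and
`λ_α > c+ε`, and zero otherwise.
-/

section Orthonormal

variable {ι n : Type*} [Fintype n] [DecidableEq ι] {e : ι → n → ℝ}

theorem orthonormal_toLp_of_dotProduct (he : ∀ k l, e k ⬝ᵥ e l = if k = l then 1 else 0) :
    Orthonormal ℝ fun k => WithLp.toLp 2 (e k) :=
  orthonormal_iff_ite.mpr fun k l => by
    rw [EuclideanSpace.inner_toLp_toLp, star_trivial, dotProduct_comm, he]

theorem sum_dotProduct_sq_le (he : ∀ k l, e k ⬝ᵥ e l = if k = l then 1 else 0)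
    (K : Finset ι) (x : n → ℝ) : ∑ k ∈ K, (e k ⬝ᵥ x) ^ 2 ≤ x ⬝ᵥ x := by
  have bessel := (orthonormal_toLp_of_dotProduct he).sum_inner_products_le (WithLp.toLp 2 x)
    (s := K)
  simp only [EuclideanSpace.inner_toLp_toLp, star_trivial, Real.norm_eq_abs, sq_abs,
    EuclideanSpace.real_norm_sq_eq] at bessel
  calc ∑ k ∈ K, (e k ⬝ᵥ x) ^ 2 = ∑ k ∈ K, (x ⬝ᵥ e k) ^ 2 :=
        sum_congr rfl fun k _ => by rw [dotProduct_comm]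
    _ ≤ ∑ i, x i ^ 2 := bessel
    _ = x ⬝ᵥ x := by simp only [dotProduct, sq]

theorem sum_vecMulVec_mul_sum_vecMulVec {l p : Type*}
    (he : ∀ k l, e k ⬝ᵥ e l = if k = l then 1 else 0) (K : Finset ι)
    (a : ι → l → ℝ) (b : ι → p → ℝ) :
    (∑ k ∈ K, vecMulVec (a k) (e k)) * ∑ k ∈ K, vecMulVec (e k) (b k)
      = ∑ k ∈ K, vecMulVec (a k) (b k) := by
  simp only [Matrix.sum_mul, Matrix.mul_sum, vecMulVec_mul_vecMulVec, vecMulVec_smul]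
  simp only [he, ite_smul, one_smul, zero_smul, sum_ite_eq']
  exact sum_congr rfl fun k hk => by simp [hk]

theorem transpose_mul_self_sum_smul_vecMulVec {p : Type*} [Fintype ι]
    (he : ∀ k l, e k ⬝ᵥ e l = if k = l then 1 else 0) (σ : ι → ℝ) (v : ι → p → ℝ) :
    (∑ k, σ k • vecMulVec (e k) (v k))ᵀ * ∑ k, σ k • vecMulVec (e k) (v k)
      = ∑ k, σ k ^ 2 • vecMulVec (v k) (v k) := by
  simp only [← vecMulVec_smul]
  rw [transpose_sum]
  simp only [transpose_vecMulVec]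
  rw [sum_vecMulVec_mul_sum_vecMulVec he]
  simp only [vecMulVec_smul, smul_vecMulVec, smul_smul, sq]

theorem posSemidef_one_sub_sum_vecMulVec [DecidableEq n]
    (he : ∀ k l, e k ⬝ᵥ e l = if k = l then 1 else 0) (K : Finset ι) :
    (1 - ∑ k ∈ K, vecMulVec (e k) (e k)).PosSemidef := by
  refine .of_dotProduct_mulVec_nonneg ?_ fun x => ?_
  · simp [IsHermitian, conjTranspose_eq_transpose_of_trivial, transpose_sum]
  · have := sum_dotProduct_sq_le he K x
    simp only [star_trivial, sub_mulVec, one_mulVec, dotProduct_sub, sum_mulVec, dotProduct_sum,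
      vecMulVec_mulVec, op_smul_eq_smul, dotProduct_smul, smul_eq_mul]
    simp only [dotProduct_comm x, ← sq]
    linarith

theorem sum_mulVec_dotProduct_mulVec_le_trace {m : Type*} [Fintype m] [Fintype ι]
    (he : ∀ k l, e k ⬝ᵥ e l = if k = l then 1 else 0) (Z : Matrix m n ℝ) :
    ∑ k, (Z *ᵥ e k) ⬝ᵥ (Z *ᵥ e k) ≤ trace (Zᵀ * Z) :=
  calc ∑ k, (Z *ᵥ e k) ⬝ᵥ (Z *ᵥ e k) = ∑ i, ∑ k, (e k ⬝ᵥ Z i) ^ 2 := by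
        simp only [dotProduct, mulVec, sq]
        rw [sum_comm]
        simp only [mul_comm]
    _ ≤ ∑ i, Z i ⬝ᵥ Z i := sum_le_sum fun i _ => sum_dotProduct_sq_le he univ (Z i)
    _ = trace (Zᵀ * Z) := by
        rw [trace_mul_comm]
        simp [trace, mul_apply, dotProduct]

end Orthonormal

section Contraction

variable {m n : Type*} [Fintype m] [Fintype n] [DecidableEq m] {Z : Matrix m n ℝ}

theorem mulVec_dotProduct_mulVec_le (hZ : (1 - Z * Zᵀ).PosSemidef) (x : n → ℝ) :
    (Z *ᵥ x) ⬝ᵥ (Z *ᵥ x) ≤ x ⬝ᵥ x := by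
  have hZt : (Zᵀ *ᵥ (Z *ᵥ x)) ⬝ᵥ (Zᵀ *ᵥ (Z *ᵥ x)) ≤ (Z *ᵥ x) ⬝ᵥ (Z *ᵥ x) := by
    have := hZ.dotProduct_mulVec_nonneg (Z *ᵥ x)
    rwa [star_trivial, sub_mulVec, one_mulVec, dotProduct_sub, sub_nonneg, ← mulVec_mulVec,
      dotProduct_mulVec _ Z, ← mulVec_transpose] at this
  have hsq : (Z *ᵥ x) ⬝ᵥ (Z *ᵥ x) = x ⬝ᵥ (Zᵀ *ᵥ (Z *ᵥ x)) := by
    rw [dotProduct_mulVec x, ← mulVec_transpose, transpose_transpose, dotProduct_comm]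
  have hcs : (x ⬝ᵥ (Zᵀ *ᵥ (Z *ᵥ x))) ^ 2
      ≤ (x ⬝ᵥ x) * ((Zᵀ *ᵥ (Z *ᵥ x)) ⬝ᵥ (Zᵀ *ᵥ (Z *ᵥ x))) := by
    simpa only [dotProduct, sq] using sum_mul_sq_le_sq_mul_sq univ x (Zᵀ *ᵥ (Z *ᵥ x))
  have hx : 0 ≤ x ⬝ᵥ x := by simpa using dotProduct_self_star_nonneg x
  have hZx : 0 ≤ (Z *ᵥ x) ⬝ᵥ (Z *ᵥ x) := by simpa using dotProduct_self_star_nonneg (Z *ᵥ x)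
  rw [← hsq] at hcs
  nlinarith

theorem trace_transpose_mul_self_le_card (hZ : (1 - Z * Zᵀ).PosSemidef) :
    trace (Zᵀ * Z) ≤ Fintype.card m := by
  have := hZ.trace_nonneg
  rw [trace_sub, trace_one, trace_mul_comm] at this
  linarith

end Contraction

theorem sum_le_sum_mul_of_le_threshold {ι : Type*} [Fintype ι] [DecidableEq ι] (s : Finset ι)
    {b t : ι → ℝ} {A : ℝ} (hA : A ≤ 0) (hs : ∀ i ∈ s, b i ≤ A) (hsc : ∀ i ∉ s, A ≤ b i)
    (ht0 : ∀ i, 0 ≤ t i) (ht1 : ∀ i, t i ≤ 1) (hbudget : ∑ i, t i ≤ #s) :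
    ∑ i ∈ s, b i ≤ ∑ i, b i * t i := by
  have hin : ∑ i ∈ s, b i * (1 - t i) ≤ ∑ i ∈ s, A * (1 - t i) :=
    sum_le_sum fun i hi => mul_le_mul_of_nonneg_right (hs i hi) (sub_nonneg.mpr (ht1 i))
  have hout : ∑ i ∈ sᶜ, A * t i ≤ ∑ i ∈ sᶜ, b i * t i :=
    sum_le_sum fun i hi => mul_le_mul_of_nonneg_right (hsc i (mem_compl.mp hi)) (ht0 i)
  have hslack : A * (#s - ∑ i, t i) ≤ 0 :=
    mul_nonpos_of_nonpos_of_nonneg hA (sub_nonneg.mpr hbudget)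
  rw [← sum_add_sum_compl s (fun i => b i * t i)]
  rw [← sum_add_sum_compl s t] at hslack
  simp only [mul_sub, mul_one, sum_sub_distrib, ← mul_sum, sum_const, nsmul_eq_mul] at hin hout
  linarith

theorem sum_castLE_le_sum_mul {m N : ℕ} (hm : m ≤ N) {b t : Fin N → ℝ} (hb : Monotone b)
    (hb0 : ∀ i, b i ≤ 0) (ht0 : ∀ i, 0 ≤ t i) (ht1 : ∀ i, t i ≤ 1) (hbudget : ∑ i, t i ≤ m) :
    ∑ k : Fin m, b (Fin.castLE hm k) ≤ ∑ i, b i * t i := by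
  cases N with
  | zero => obtain rfl := Nat.le_zero.mp hm; simp
  | succ N =>
    have hmem : ∀ i, i ∈ univ.map (Fin.castLEEmb hm) ↔ (i : ℕ) < m := fun i => by
      simp only [mem_map, mem_univ, true_and, Fin.castLEEmb_apply]
      exact Set.ext_iff.mp (Fin.range_castLE hm) i
    -- for `m = 0` the threshold index `m - 1` truncates to `0`, still below every index
    simpa using sum_le_sum_mul_of_le_threshold (univ.map (Fin.castLEEmb hm))
      (b := b) (t := t) (A := b ⟨m - 1, by omega⟩) (hb0 _)
      (fun i hi => hb (Fin.mk_le_mk.mpr (by have := (hmem i).mp hi; omega)))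
      (fun i hi => hb (Fin.mk_le_mk.mpr (by have := mt (hmem i).mpr hi; omega))) ht0 ht1
      (by simpa using hbudget)

section Spectral

variable {d N T : ℕ} {v : Fin N → Fin T → ℝ} {lam : Fin N → ℝ}

theorem vecMul_sum_smul_vecMulVec (hv : ∀ α β, v α ⬝ᵥ v β = if α = β then 1 else 0)
    (β : Fin N) : v β ᵥ* ∑ α, lam α • vecMulVec (v α) (v α) = lam β • v β := by
  simp [Matrix.vecMul_sum, vecMul_smul, vecMul_vecMulVec, hv, ite_smul]

theorem trace_smul_sub_mul_sum_vecMulVec (Z : Matrix (Fin d) (Fin T) ℝ) (cc : ℝ) :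
    trace (cc • (Zᵀ * Z) - Zᵀ * Z * ∑ α, lam α • vecMulVec (v α) (v α))
      = cc * trace (Zᵀ * Z) - ∑ α, lam α * ((Z *ᵥ v α) ⬝ᵥ (Z *ᵥ v α)) := by
  simp only [trace_sub, trace_smul, smul_eq_mul, Matrix.mul_sum, Matrix.mul_smul, trace_sum,
    mul_vecMulVec, trace_vecMulVec, ← mulVec_mulVec, mulVec_transpose, ← dotProduct_mulVec]

theorem neg_sum_max_le_trace (hv : ∀ α β, v α ⬝ᵥ v β = if α = β then 1 else 0)
    (hlam : Antitone lam) {cc : ℝ} (hcc : 0 ≤ cc) {Z : Matrix (Fin d) (Fin T) ℝ}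
    (hZ : (1 - Z * Zᵀ).PosSemidef) :
    -∑ k : Fin (min d N), max (lam (Fin.castLE (min_le_right d N) k) - cc) 0
      ≤ trace (cc • (Zᵀ * Z) - Zᵀ * Z * ∑ α, lam α • vecMulVec (v α) (v α)) := by
  set t : Fin N → ℝ := fun α => (Z *ᵥ v α) ⬝ᵥ (Z *ᵥ v α)
  have ht0 : ∀ α, 0 ≤ t α := fun α => by simpa using dotProduct_self_star_nonneg (Z *ᵥ v α)
  have ht1 : ∀ α, t α ≤ 1 := fun α => by
    simpa [hv] using mulVec_dotProduct_mulVec_le hZ (v α)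
  have htrace : ∑ α, t α ≤ trace (Zᵀ * Z) := sum_mulVec_dotProduct_mulVec_le_trace hv Z
  have hbudget : ∑ α, t α ≤ (min d N : ℕ) := by
    rw [Nat.cast_min]
    refine le_min ?_ ?_
    · simpa using htrace.trans (trace_transpose_mul_self_le_card hZ)
    · simpa using sum_le_sum fun α (_ : α ∈ univ) => ht1 α
  have hb : Monotone fun α => min (cc - lam α) 0 :=
    fun α β hαβ => min_le_min_right 0 (sub_le_sub_left (hlam hαβ) cc)
  calc -∑ k : Fin (min d N), max (lam (Fin.castLE (min_le_right d N) k) - cc) 0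
      = ∑ k : Fin (min d N), min (cc - lam (Fin.castLE (min_le_right d N) k)) 0 := by
        simp only [← sum_neg_distrib, ← min_neg_neg, neg_sub, neg_zero]
    _ ≤ ∑ α, min (cc - lam α) 0 * t α :=
        sum_castLE_le_sum_mul _ hb (fun _ => min_le_right _ _) ht0 ht1 hbudget
    _ ≤ ∑ α, (cc - lam α) * t α :=
        sum_le_sum fun α _ => mul_le_mul_of_nonneg_right (min_le_left _ _) (ht0 α)
    _ = cc * ∑ α, t α - ∑ α, lam α * t α := by
        simp only [sub_mul, sum_sub_distrib, mul_sum]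
    _ ≤ cc * trace (Zᵀ * Z) - ∑ α, lam α * t α := by gcongr
    _ = _ := (trace_smul_sub_mul_sum_vecMulVec Z cc).symm

theorem exists_trace_eq_neg_sum_max (hv : ∀ α β, v α ⬝ᵥ v β = if α = β then 1 else 0)
    (cc : ℝ) : ∃ Z : Matrix (Fin d) (Fin T) ℝ, (1 - Z * Zᵀ).PosSemidef ∧
      trace (cc • (Zᵀ * Z) - Zᵀ * Z * ∑ α, lam α • vecMulVec (v α) (v α))
        = -∑ k : Fin (min d N), max (lam (Fin.castLE (min_le_right d N) k) - cc) 0 := by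
  set e : Fin (min d N) → Fin d → ℝ := fun k => Pi.single (Fin.castLE (min_le_left d N) k) 1
  set w : Fin (min d N) → Fin T → ℝ := fun k => v (Fin.castLE (min_le_right d N) k)
  set K := univ.filter fun k => cc < lam (Fin.castLE (min_le_right d N) k)
  have he : ∀ k l, e k ⬝ᵥ e l = if k = l then 1 else 0 := fun k l => by
    simp [e, Pi.single_apply, (Fin.castLE_injective _).eq_iff, eq_comm]
  have hw : ∀ k l, w k ⬝ᵥ w l = if k = l then 1 else 0 := fun k l => by
    simp [w, hv, (Fin.castLE_injective _).eq_iff]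
  set Z := ∑ k ∈ K, vecMulVec (e k) (w k)
  have hZt : Zᵀ = ∑ k ∈ K, vecMulVec (w k) (e k) := by simp [Z, transpose_sum]
  refine ⟨Z, ?_, ?_⟩
  · rw [hZt, sum_vecMulVec_mul_sum_vecMulVec hw]
    exact posSemidef_one_sub_sum_vecMulVec he K
  · rw [hZt, sum_vecMulVec_mul_sum_vecMulVec he, trace_sub, trace_smul, Matrix.sum_mul,
      trace_sum, trace_sum, smul_eq_mul, mul_sum, ← sum_sub_distrib, sum_filter,
      ← sum_neg_distrib]
    refine sum_congr rfl fun k _ => ?_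
    simp only [vecMulVec_mul, w, vecMul_sum_smul_vecMulVec hv, trace_vecMulVec, dotProduct_smul,
      hv]
    split_ifs with h
    · rw [max_eq_left (by linarith)]; ring
    · rw [max_eq_right (by linarith)]; ring

theorem isLeast_trace_smul_sub_mul_sum_vecMulVec
    (hv : ∀ α β, v α ⬝ᵥ v β = if α = β then 1 else 0) (hlam : Antitone lam) {cc : ℝ}
    (hcc : 0 ≤ cc) :
    IsLeast
      { r : ℝ | ∃ Z : Matrix (Fin d) (Fin T) ℝ, (1 - Z * Zᵀ).PosSemidef ∧
          r = trace (cc • (Zᵀ * Z) - Zᵀ * Z * ∑ α, lam α • vecMulVec (v α) (v α)) }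
      (-∑ k : Fin (min d N), max (lam (Fin.castLE (min_le_right d N) k) - cc) 0) := by
  refine ⟨?_, ?_⟩
  · obtain ⟨Z, hZ, hval⟩ := exists_trace_eq_neg_sum_max (d := d) (lam := lam) hv cc
    exact ⟨Z, hZ, hval.symm⟩
  · rintro r ⟨Z, hZ, rfl⟩
    exact neg_sum_max_le_trace hv hlam hcc hZ

end Spectral

theorem transpose_mul_self_fromRows_whitened {dX dY T : ℕ} (X : Matrix (Fin dX) (Fin T) ℝ)
    (Y : Matrix (Fin dY) (Fin T) ℝ) {ε : ℝ} (hε : 0 ≤ ε) {S : Matrix (Fin dX) (Fin dX) ℝ}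
    (hS : S.IsHermitian) (hSsq : S * S = X * Xᵀ) :
    (fromRows (√ε • (S⁻¹ * X)) Y)ᵀ * fromRows (√ε • (S⁻¹ * X)) Y
      = ε • (Xᵀ * (X * Xᵀ)⁻¹ * X) + Yᵀ * Y := by
  have hSt : Sᵀ = S := (conjTranspose_eq_transpose_of_trivial S).symm.trans hS.eq
  rw [transpose_fromRows, fromCols_mul_fromRows, transpose_smul, transpose_mul,
    transpose_nonsing_inv, hSt, Matrix.smul_mul, Matrix.mul_smul, smul_smul,
    Real.mul_self_sqrt hε, ← hSsq, Matrix.mul_inv_rev]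
  simp only [Matrix.mul_assoc]

theorem ccpc_min_value_general
    (dX dY d T : ℕ) (X : Matrix (Fin dX) (Fin T) ℝ) (Y : Matrix (Fin dY) (Fin T) ℝ)
    (ε c : ℝ) (hε : 0 < ε) (hc : 0 ≤ c)
    -- `S` is the positive-semidefinite square root of `XXᵀ`, so `S⁻¹ = (XXᵀ)^{-1/2}`
    (S : Matrix (Fin dX) (Fin dX) ℝ) (hS : S.PosSemidef) (hSsq : S * S = X * Xᵀ)
    -- singular value data of the concatenated whitened matrix `Ξ = [√ε S⁻¹ X ; Y]`
    (lam : Fin (dX + dY) → ℝ)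
    (u : Fin (dX + dY) → (Fin dX ⊕ Fin dY) → ℝ)
    (v : Fin (dX + dY) → Fin T → ℝ)
    (hlam_anti : Antitone lam) (hlam_nonneg : ∀ α, 0 ≤ lam α)
    (hu : ∀ α β, u α ⬝ᵥ u β = if α = β then (1 : ℝ) else 0)
    (hv : ∀ α β, v α ⬝ᵥ v β = if α = β then (1 : ℝ) else 0)
    (hSVD : fromRows (Real.sqrt ε • (S⁻¹ * X)) Y
      = ∑ α : Fin (dX + dY), Real.sqrt (lam α) • vecMulVec (u α) (v α)) :
    IsLeast
      { r : ℝ | ∃ Z : Matrix (Fin d) (Fin T) ℝ,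
          ((1 : Matrix (Fin d) (Fin d) ℝ) - Z * Zᵀ).PosSemidef ∧
          r = Matrix.trace ((c + ε) • (Zᵀ * Z)
            - Zᵀ * Z * (ε • (Xᵀ * (X * Xᵀ)⁻¹ * X) + Yᵀ * Y)) }
      (-(∑ α : Fin (min d (dX + dY)),
          max (lam (Fin.castLE (min_le_right d (dX + dY)) α) - c - ε) 0)) := by
  have hgram : ε • (Xᵀ * (X * Xᵀ)⁻¹ * X) + Yᵀ * Y = ∑ α, lam α • vecMulVec (v α) (v α) := by
    rw [← transpose_mul_self_fromRows_whitened X Y hε.le hS.isHermitian hSsq, hSVD,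
      transpose_mul_self_sum_smul_vecMulVec hu]
    simp only [Real.sq_sqrt (hlam_nonneg _)]
  simp only [hgram, sub_sub]
  exact isLeast_trace_smul_sub_mul_sum_vecMulVec hv hlam_anti (by positivity)

/-- **Minimum value of the covariance-constrained predictive-coding objective.**
With `Ξ = [√ε (XXᵀ)^{-1/2} X ; Y]` having nonincreasing eigenvalues `λ α` of `ΞΞᵀ`,
the minimum of `tr[(c+ε) ZᵀZ − ZᵀZ (ε Xᵀ(XXᵀ)⁻¹X + YᵀY)]` over `Z ∈ ℝ^{d×T}` with
`Z Zᵀ ≼ I_d` equals `−∑_{α=1}^{min(d, dX+dY)} max(λ α − c − ε, 0)`. -/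
theorem ccpc_min_value
    (dX dY d T : ℕ) (X : Matrix (Fin dX) (Fin T) ℝ) (Y : Matrix (Fin dY) (Fin T) ℝ)
    (ε c : ℝ) (hε : 0 < ε) (hc : 0 ≤ c)
    (hX : IsUnit (X * Xᵀ).det)
    -- `S` is the positive-semidefinite square root of `XXᵀ`, so `S⁻¹ = (XXᵀ)^{-1/2}`
    (S : Matrix (Fin dX) (Fin dX) ℝ) (hS : S.PosSemidef) (hSsq : S * S = X * Xᵀ)
    -- singular value data of the concatenated whitened matrix `Ξ = [√ε S⁻¹ X ; Y]`
    (lam : Fin (dX + dY) → ℝ)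
    (u : Fin (dX + dY) → (Fin dX ⊕ Fin dY) → ℝ)
    (v : Fin (dX + dY) → Fin T → ℝ)
    (hlam_anti : Antitone lam) (hlam_nonneg : ∀ α, 0 ≤ lam α)
    (hu : ∀ α β, u α ⬝ᵥ u β = if α = β then (1 : ℝ) else 0)
    (hv : ∀ α β, v α ⬝ᵥ v β = if α = β then (1 : ℝ) else 0)
    (hSVD : fromRows (Real.sqrt ε • (S⁻¹ * X)) Y
      = ∑ α : Fin (dX + dY), Real.sqrt (lam α) • vecMulVec (u α) (v α)) :
    IsLeast
      { r : ℝ | ∃ Z : Matrix (Fin d) (Fin T) ℝ,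
          ((1 : Matrix (Fin d) (Fin d) ℝ) - Z * Zᵀ).PosSemidef ∧
          r = Matrix.trace ((c + ε) • (Zᵀ * Z)
            - Zᵀ * Z * (ε • (Xᵀ * (X * Xᵀ)⁻¹ * X) + Yᵀ * Y)) }
      (-(∑ α : Fin (min d (dX + dY)),
          max (lam (Fin.castLE (min_le_right d (dX + dY)) α) - c - ε) 0)) :=
  ccpc_min_value_general dX dY d T X Y ε c hε hc S hS hSsq lam u v hlam_anti hlam_nonneg hu hv hSVD
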